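/- Let d > 1 be an integer, K, T positive integers, η > 0, c > 0, V₁, …, V_K > 0 with V = ∑_k V_k, and a : {1,…,T} → {1,…,K} an action sequence with N_t = #{s ≤ t : a_s = a_t}. If the instantaneous regrets satisfy 0 ≤ R_t ≤ 2η·(c·V_{a_t}/N_t)^{1/d} for every t, then the cumulative regret satisfies ∑_{t=1}^{T} R_t ≤ (2ηd/(d−1)) · c^{1/d} · V^{1/d} · T^{(d−1)/d}. -/

import Mathlib

/-!
Among the pulls of a fixed arm `k`, the counts `N_t` run through `1, …, n_k` exactly once, where
`n_k` is the total number of pulls of `k`. So the regret of arm `k` is at most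
`2η (c V_k)^{1/d} ∑_{j ≤ n_k} j^{-1/d} ≤ 2η (c V_k)^{1/d} n_k^{1-1/d} / (1 - 1/d)`, and Hölder's
inequality with exponents `d` and `d/(d-1)` bounds `∑_k V_k^{1/d} n_k^{1-1/d}` by
`V^{1/d} T^{1-1/d}`, since `∑_k n_k = T`.
-/

open Finset

theorem Real.rpow_le_add_one_rpow_sub_mul {x q : ℝ} (hx : 0 ≤ x) (hq0 : 0 ≤ q) (hq1 : q ≤ 1) :
    x ^ q ≤ (x + 1) ^ q - q * (x + 1) ^ (q - 1) := by
  have hx1 : 0 < x + 1 := by linarith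
  -- weighted AM-GM for `x` and `x + 1` with weights `q` and `1 - q`
  have amgm : x ^ q * (x + 1) ^ (1 - q) ≤ x + 1 - q := by
    have := Real.geom_mean_le_arith_mean2_weighted hq0 (sub_nonneg.2 hq1) hx hx1.le
      (add_sub_cancel q 1)
    linarith
  have hsplit : (x + 1) ^ q = (x + 1) * (x + 1) ^ (q - 1) := by
    conv_lhs => rw [← add_sub_cancel 1 q, Real.rpow_add hx1, Real.rpow_one]
  calc x ^ q = x ^ q * (x + 1) ^ (1 - q) * (x + 1) ^ (q - 1) := by
        rw [mul_assoc, ← Real.rpow_add hx1, show 1 - q + (q - 1) = 0 by ring, Real.rpow_zero,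
          mul_one]
    _ ≤ (x + 1 - q) * (x + 1) ^ (q - 1) := by gcongr
    _ = (x + 1) ^ q - q * (x + 1) ^ (q - 1) := by rw [hsplit]; ring

theorem Real.sum_Icc_rpow_neg_le {p : ℝ} (hp0 : 0 ≤ p) (hp1 : p < 1) (n : ℕ) :
    ∑ j ∈ Icc 1 n, (j : ℝ) ^ (-p) ≤ (n : ℝ) ^ (1 - p) / (1 - p) := by
  have hq : 0 < 1 - p := by linarith
  induction n with
  | zero => simp [Real.zero_rpow hq.ne']
  | succ n ih =>
    have step := Real.rpow_le_add_one_rpow_sub_mul n.cast_nonneg hq.le (by linarith)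
    rw [sum_Icc_succ_top (by omega), Nat.cast_succ, le_div_iff₀ hq]
    rw [le_div_iff₀ hq] at ih
    rw [show 1 - p - 1 = -p by ring] at step
    linarith

theorem Real.sum_rpow_mul_rpow_one_sub_le {ι : Type*} (s : Finset ι) {θ : ℝ} (hθ0 : 0 < θ)
    (hθ1 : θ < 1) {f g : ι → ℝ} (hf : ∀ i ∈ s, 0 ≤ f i) (hg : ∀ i ∈ s, 0 ≤ g i) :
    ∑ i ∈ s, f i ^ θ * g i ^ (1 - θ) ≤ (∑ i ∈ s, f i) ^ θ * (∑ i ∈ s, g i) ^ (1 - θ) := by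
  have hθ1' : 1 - θ ≠ 0 := by linarith
  have := Real.inner_le_Lp_mul_Lq_of_nonneg s (Real.HolderConjugate.inv_one_sub_inv hθ0 hθ1)
    (fun i hi => Real.rpow_nonneg (hf i hi) θ) (fun i hi => Real.rpow_nonneg (hg i hi) (1 - θ))
  rwa [one_div, inv_inv, one_div, inv_inv,
    sum_congr rfl fun i hi => Real.rpow_rpow_inv (hf i hi) hθ0.ne',
    sum_congr rfl fun i hi => Real.rpow_rpow_inv (hg i hi) hθ1'] at this

theorem Finset.strictMonoOn_card_filter_le {ι : Type*} [LinearOrder ι] (s : Finset ι) :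
    StrictMonoOn (fun t => #{u ∈ s | u ≤ t}) s := by
  intro x _ y hy hxy
  refine card_lt_card ((ssubset_iff_of_subset ?_).2 ⟨y, ?_, ?_⟩)
  · exact monotone_filter_right s fun u _ (hu : u ≤ x) => hu.trans hxy.le
  · simpa using hy
  · simp [hxy]

theorem Finset.sum_comp_card_filter_le {ι M : Type*} [LinearOrder ι] [AddCommMonoid M]
    (s : Finset ι) (f : ℕ → M) : ∑ t ∈ s, f #{u ∈ s | u ≤ t} = ∑ j ∈ Icc 1 #s, f j := by
  have hinj := s.strictMonoOn_card_filter_le.injOn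
  have himage : s.image (fun t => #{u ∈ s | u ≤ t}) = Icc 1 #s := by
    refine eq_of_subset_of_card_le (fun j hj => ?_) ?_
    · obtain ⟨t, ht, rfl⟩ := mem_image.1 hj
      exact mem_Icc.2 ⟨card_pos.2 ⟨t, by simp [ht]⟩, card_filter_le _ _⟩
    · simp [card_image_of_injOn hinj]
  rw [← himage, sum_image hinj]

section PullCount

variable {ι α : Type*} [Fintype ι] [LinearOrder ι] [DecidableEq α]

def pullCount (a : ι → α) (t : ι) : ℕ := #{s | s ≤ t ∧ a s = a t}

theorem sum_comp_pullCount {M : Type*} [AddCommMonoid M] [Fintype α] (a : ι → α)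
    (f : α → ℕ → M) :
    ∑ t, f (a t) (pullCount a t) = ∑ k, ∑ j ∈ Icc 1 #{t | a t = k}, f k j := by
  rw [← sum_fiberwise univ a]
  refine sum_congr rfl fun k _ => ?_
  rw [← sum_comp_card_filter_le]
  refine sum_congr rfl fun t ht => ?_
  rw [(mem_filter.1 ht).2, pullCount, filter_filter, (mem_filter.1 ht).2]
  congr 2
  ext s
  simp [and_comm]

theorem sum_le_of_le_mul_div_pullCount_rpow [Fintype α] {p C : ℝ} (hp0 : 0 < p) (hp1 : p < 1)
    (hC : 0 ≤ C) {W : α → ℝ} (hW : ∀ k, 0 ≤ W k) (a : ι → α) {R : ι → ℝ}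
    (hR : ∀ t, R t ≤ C * (W (a t) / pullCount a t) ^ p) :
    ∑ t, R t ≤ C / (1 - p) * (∑ k, W k) ^ p * (Fintype.card ι : ℝ) ^ (1 - p) := by
  set n : α → ℕ := fun k => #{t | a t = k}
  have hn : ∑ k, (n k : ℝ) = Fintype.card ι := by
    exact_mod_cast (card_eq_sum_card_fiberwise fun t _ => mem_univ (a t)).symm
  calc ∑ t, R t ≤ ∑ t, C * W (a t) ^ p * (pullCount a t : ℝ) ^ (-p) := by
        refine sum_le_sum fun t _ => (hR t).trans_eq ?_
        rw [Real.div_rpow (hW _) (Nat.cast_nonneg _), Real.rpow_neg (Nat.cast_nonneg _)]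
        ring
    _ = ∑ k, ∑ j ∈ Icc 1 (n k), C * W k ^ p * (j : ℝ) ^ (-p) :=
        sum_comp_pullCount a fun k j => C * W k ^ p * (j : ℝ) ^ (-p)
    _ ≤ ∑ k, C * W k ^ p * ((n k : ℝ) ^ (1 - p) / (1 - p)) := by
        gcongr with k
        rw [← mul_sum]
        have hWk := hW k
        gcongr
        exact Real.sum_Icc_rpow_neg_le hp0.le hp1 (n k)
    _ = C / (1 - p) * ∑ k, W k ^ p * (n k : ℝ) ^ (1 - p) := by
        rw [mul_sum]
        exact sum_congr rfl fun k _ => by ring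
    _ ≤ C / (1 - p) * ((∑ k, W k) ^ p * (∑ k, (n k : ℝ)) ^ (1 - p)) := by
        have hq : 0 < 1 - p := by linarith
        gcongr
        exact Real.sum_rpow_mul_rpow_one_sub_le _ hp0 hp1 (fun k _ => hW k)
          (fun k _ => Nat.cast_nonneg _)
    _ = C / (1 - p) * (∑ k, W k) ^ p * (Fintype.card ι : ℝ) ^ (1 - p) := by
        rw [hn, mul_assoc]

end PullCount

theorem cumulative_regret_bound_general (d : ℕ) (hd : 1 < d) (K T : ℕ)
    (η c : ℝ) (hη : 0 < η) (hc : 0 < c) (V : Fin K → ℝ) (hV : ∀ k, 0 < V k)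
    (a : Fin T → Fin K) (R : Fin T → ℝ)
    (hR : ∀ t : Fin T, 0 ≤ R t ∧
      R t ≤ 2 * η * (c * V (a t) /
        (({s : Fin T | s ≤ t ∧ a s = a t} : Finset (Fin T)).card : ℝ)) ^ (1 / (d : ℝ))) :
    ∑ t : Fin T, R t ≤
      (2 * η * (d : ℝ) / ((d : ℝ) - 1)) * c ^ (1 / (d : ℝ)) *
        (∑ k : Fin K, V k) ^ (1 / (d : ℝ)) * (T : ℝ) ^ (((d : ℝ) - 1) / (d : ℝ)) := by
  have hd1 : (1 : ℝ) < d := by exact_mod_cast hd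
  have bound := sum_le_of_le_mul_div_pullCount_rpow (by positivity)
    ((div_lt_one (by linarith)).2 hd1) (by positivity) (fun k => (mul_pos hc (hV k)).le) a
    fun t => (hR t).2
  rw [← mul_sum, Real.mul_rpow hc.le (sum_nonneg fun k _ => (hV k).le), Fintype.card_fin,
    show 1 - 1 / (d : ℝ) = (d - 1) / d by field_simp] at bound
  convert bound using 1
  rw [div_div_eq_mul_div]
  ring

/-- Deterministic core of the cumulative regret bound: if at each step the instantaneous
regret satisfies `0 ≤ R_t ≤ 2η (c V_{a_t} / N_t)^{1/d}` where `N_t` is the number of pulls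
of arm `a_t` up to and including time `t`, then
`∑_t R_t ≤ (2ηd/(d-1)) c^{1/d} V^{1/d} T^{(d-1)/d}` with `V = ∑_k V_k`. -/
theorem cumulative_regret_bound (d : ℕ) (hd : 1 < d) (K T : ℕ) (hK : 0 < K) (hT : 0 < T)
    (η c : ℝ) (hη : 0 < η) (hc : 0 < c) (V : Fin K → ℝ) (hV : ∀ k, 0 < V k)
    (a : Fin T → Fin K) (R : Fin T → ℝ)
    (hR : ∀ t : Fin T, 0 ≤ R t ∧
      R t ≤ 2 * η * (c * V (a t) /
        (({s : Fin T | s ≤ t ∧ a s = a t} : Finset (Fin T)).card : ℝ)) ^ (1 / (d : ℝ))) :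
    ∑ t : Fin T, R t ≤
      (2 * η * (d : ℝ) / ((d : ℝ) - 1)) * c ^ (1 / (d : ℝ)) *
        (∑ k : Fin K, V k) ^ (1 / (d : ℝ)) * (T : ℝ) ^ (((d : ℝ) - 1) / (d : ℝ)) :=
  cumulative_regret_bound_general d hd K T η c hη hc V hV a R hR
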